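/- arXiv:math/0404058 — 3 statements merged into one kernel-verified Lean document; each statement's English description precedes it below -/
import Mathlib

section
/- Let s be a finite multiset of natural numbers, let g ∈ s, and let t be the multiset obtained from s by removing one copy of g and adding a finite multiset b of natural numbers, each element of which is strictly less than g. Then t is strictly smaller than s in the order obtained by comparing the non-increasing sorted lists of the multisets lexicographically (where a proper prefix is considered smaller than the longer list). -/
/-- The elements of a finite multiset of naturals listed in non-increasing order. -/
def sortDesc (m : Multiset ℕ) : List ℕ := (Multiset.sort m (· ≤ ·)).reverse

/-- The complexity order on finite multisets of naturals: compare the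
non-increasing sorted lists lexicographically, a proper prefix being smaller. -/
def MLT (m m' : Multiset ℕ) : Prop := List.Lex (· < ·) (sortDesc m) (sortDesc m')

/-!
Lexicographic comparison of non-increasing lists is decided at the largest value whose
multiplicities differ. Replacing one copy of `g` by elements below `g` leaves every
multiplicity above `g` unchanged and lowers that of `g` by one, so the result is smaller.
-/

namespace List

variable {α : Type*} [LinearOrder α]

theorem count_eq_zero_of_pairwise_ge_of_lt {a x : α} {l : List α}
    (hl : (a :: l).Pairwise (· ≥ ·)) (hx : a < x) : (a :: l).count x = 0 :=
  count_eq_zero.2 fun hmem => by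
    rcases mem_cons.1 hmem with rfl | hmem
    · exact lt_irrefl _ hx
    · exact absurd (rel_of_pairwise_cons hl hmem) (not_le.2 hx)

theorem lex_lt_of_count_eq_of_count_lt {N : α} :
    ∀ {l l' : List α}, l.Pairwise (· ≥ ·) → l'.Pairwise (· ≥ ·) →
      (∀ x, N < x → l.count x = l'.count x) → l.count N < l'.count N →
      Lex (· < ·) l l'
  | [], [], _, _, _, hN => by simp at hN
  | [], _ :: _, _, _, _, _ => Lex.nil
  | _ :: _, [], _, _, _, hN => by simp at hN
  | c :: l, a :: l', hl, hl', habove, hN => by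
    rcases lt_trichotomy c a with hca | rfl | hac
    · exact Lex.rel hca
    · refine Lex.cons (lex_lt_of_count_eq_of_count_lt (N := N) hl.of_cons hl'.of_cons
        (fun x hx => ?_) ?_)
      · simpa only [count_cons, Nat.add_right_cancel_iff] using habove x hx
      · simpa only [count_cons, Nat.add_lt_add_iff_right] using hN
    · -- Nothing in `a :: l'` reaches `c`: the count at `c` forces `c ≤ N`, and then `N` is missing too.
      exfalso
      by_cases hNc : N < c
      · have hc_pos : 0 < (c :: l).count c := count_pos_iff.2 mem_cons_self
        rw [habove c hNc, count_eq_zero_of_pairwise_ge_of_lt hl' hac] at hc_pos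
        exact lt_irrefl 0 hc_pos
      · rw [count_eq_zero_of_pairwise_ge_of_lt hl' (hac.trans_le (not_lt.1 hNc))] at hN
        exact Nat.not_lt_zero _ hN

end List

theorem pairwise_sortDesc (m : Multiset ℕ) : (sortDesc m).Pairwise (· ≥ ·) :=
  List.pairwise_reverse.2 (Multiset.pairwise_sort m _)

theorem count_sortDesc (m : Multiset ℕ) (x : ℕ) : (sortDesc m).count x = m.count x := by
  rw [sortDesc, List.count_reverse, ← Multiset.coe_count, Multiset.sort_eq]

theorem mlt_of_count_eq_of_count_lt {m m' : Multiset ℕ} {N : ℕ}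
    (habove : ∀ x, N < x → m.count x = m'.count x) (hN : m.count N < m'.count N) :
    MLT m m' :=
  List.lex_lt_of_count_eq_of_count_lt (pairwise_sortDesc m) (pairwise_sortDesc m')
    (fun x hx => by simpa only [count_sortDesc] using habove x hx)
    (by simpa only [count_sortDesc] using hN)

theorem stmt_0 (s b : Multiset ℕ) (g : ℕ) (hg : g ∈ s)
    (hb : ∀ x ∈ b, x < g) :
    MLT (s.erase g + b) s := by
  have hb_count : ∀ x, g ≤ x → b.count x = 0 := fun x hx =>
    Multiset.count_eq_zero.2 fun hxb => (hb x hxb).not_ge hx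
  refine mlt_of_count_eq_of_count_lt (N := g) (fun x hx => ?_) ?_
  · rw [Multiset.count_add, Multiset.count_erase_of_ne hx.ne', hb_count x hx.le, add_zero]
  · rw [Multiset.count_add, Multiset.count_erase_self, hb_count g le_rfl, add_zero]
    exact Nat.sub_lt (Multiset.count_pos.2 hg) one_pos
end

section
/- Abstract version of the Finite-Implies-Finite lemma: Let D be a type with side : D → Bool and a symmetric reflexive relation disj, and reducing pairs as usual. Suppose (V, W), (D, E), and (D, E') are reducing pairs, the distance between (V, W) and (D, E') is at most n, and there is a sequence E_0 = E', E_1, ..., E_m = E such that each (D, E_i) is a reducing pair and disj E_i E_{i+1} holds for all i < m. Then the distance between (V, W) and (D, E) is at most n + 2m; in particular it is finite. -/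
variable {D : Type*}

/-- `(V, W)` is an (ordered) reducing pair: `V` lies above the surface,
`W` lies below, and they are disjoint. -/
def IsRP (side : D → Bool) (disj : D → D → Prop) (V W : D) : Prop :=
  side V = true ∧ side W = false ∧ disj V W

/-- The unordered pair `{p.1, p.2}` is a reducing pair. -/
def RPair (side : D → Bool) (disj : D → D → Prop) (p : D × D) : Prop :=
  IsRP side disj p.1 p.2 ∨ IsRP side disj p.2 p.1

/-- There is a chain `D_0, …, D_{n+1}` from the unordered pair `p` to the
unordered pair `q`: every unordered consecutive pair is a reducing pair and for
`1 ≤ j ≤ n` the disks `D_{j-1}` and `D_{j+1}` are equal or disjoint. -/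
def HasChain (side : D → Bool) (disj : D → D → Prop) (n : ℕ) (p q : D × D) : Prop :=
  ∃ f : ℕ → D,
    ((f 0, f 1) = p ∨ (f 1, f 0) = p) ∧
    ((f n, f (n + 1)) = q ∨ (f (n + 1), f n) = q) ∧
    (∀ j ≤ n, RPair side disj (f j, f (j + 1))) ∧
    (∀ j, 1 ≤ j → j ≤ n → f (j - 1) = f (j + 1) ∨ disj (f (j - 1)) (f (j + 1)))

/-- The distance between two reducing pairs: the least `n` admitting a chain,
and `∞` if there is no chain. -/
noncomputable def pairDist (side : D → Bool) (disj : D → D → Prop) (p q : D × D) : ℕ∞ :=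
  sInf {x : ℕ∞ | ∃ n : ℕ, x = (n : ℕ∞) ∧ HasChain side disj n p q}

lemma RPair.swap' {side : D → Bool} {disj : D → D → Prop} {x y : D}
    (h : RPair side disj (x, y)) : RPair side disj (y, x) := h.symm

/-- Extension of a chain by two new entries. -/
def ext1 (f : ℕ → D) (k : ℕ) (X Y : D) : ℕ → D :=
  fun j => if j = k + 2 then X else if j = k + 3 then Y else f j

lemma ext1_old (f : ℕ → D) (k : ℕ) (X Y : D) {j : ℕ} (h1 : j ≠ k + 2) (h2 : j ≠ k + 3) :
    ext1 f k X Y j = f j := by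
  unfold ext1; rw [if_neg h1, if_neg h2]

lemma ext1_k2 (f : ℕ → D) (k : ℕ) (X Y : D) : ext1 f k X Y (k + 2) = X := by
  unfold ext1; rw [if_pos rfl]

lemma ext1_k3 (f : ℕ → D) (k : ℕ) (X Y : D) : ext1 f k X Y (k + 3) = Y := by
  unfold ext1; rw [if_neg (by omega), if_pos rfl]

lemma extendChain (side : D → Bool) (disj : D → D → Prop)
    (p : D × D) (A E' E'' : D) (k : ℕ)
    (h : HasChain side disj k p (A, E'))
    (hred : RPair side disj (A, E''))
    (hd : disj E' E'') :
    HasChain side disj (k + 2) p (A, E'') := by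
  obtain ⟨f, h0, hend, hrp, htri⟩ := h
  rcases hend with hend | hend
  · -- f k = A, f (k+1) = E'
    have hA : f k = A := congrArg Prod.fst hend
    have hE : f (k + 1) = E' := congrArg Prod.snd hend
    refine ⟨ext1 f k A E'', ?_, ?_, ?_, ?_⟩
    · rw [ext1_old f k A E'' (by omega) (by omega), ext1_old f k A E'' (by omega) (by omega)]
      exact h0
    · left
      rw [ext1_k2, show k + 2 + 1 = k + 3 from rfl, ext1_k3]
    · intro j hj
      rcases Nat.lt_or_ge j (k + 1) with hj' | hj'
      · rw [ext1_old f k A E'' (by omega) (by omega), ext1_old f k A E'' (by omega) (by omega)]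
        exact hrp j (by omega)
      · have hj2 : j = k + 1 ∨ j = k + 2 := by omega
        rcases hj2 with rfl | rfl
        · rw [ext1_old f k A E'' (by omega) (by omega), show k + 1 + 1 = k + 2 from rfl,
            ext1_k2, hE]
        -- pair (E', A)
          have := hrp k (by omega)
          rw [hA, hE] at this
          exact this.swap'
        · rw [ext1_k2, show k + 2 + 1 = k + 3 from rfl, ext1_k3]
          exact hred
    · intro j h1 hjk
      rcases Nat.lt_or_ge j (k + 1) with hj' | hj'
      · rw [ext1_old f k A E'' (by omega) (by omega), ext1_old f k A E'' (by omega) (by omega)]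
        exact htri j h1 (by omega)
      · have hj2 : j = k + 1 ∨ j = k + 2 := by omega
        rcases hj2 with rfl | rfl
        · rw [show k + 1 - 1 = k from by omega, show k + 1 + 1 = k + 2 from rfl,
            ext1_old f k A E'' (by omega) (by omega), ext1_k2]
          left; exact hA
        · rw [show k + 2 - 1 = k + 1 from by omega, show k + 2 + 1 = k + 3 from rfl,
            ext1_old f k A E'' (by omega) (by omega), ext1_k3, hE]
          right; exact hd
  · -- f (k+1) = A, f k = E'
    have hA : f (k + 1) = A := congrArg Prod.fst hend
    have hE : f k = E' := congrArg Prod.snd hend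
    refine ⟨ext1 f k E'' A, ?_, ?_, ?_, ?_⟩
    · rw [ext1_old f k E'' A (by omega) (by omega), ext1_old f k E'' A (by omega) (by omega)]
      exact h0
    · right
      rw [ext1_k2, show k + 2 + 1 = k + 3 from rfl, ext1_k3]
    · intro j hj
      rcases Nat.lt_or_ge j (k + 1) with hj' | hj'
      · rw [ext1_old f k E'' A (by omega) (by omega), ext1_old f k E'' A (by omega) (by omega)]
        exact hrp j (by omega)
      · have hj2 : j = k + 1 ∨ j = k + 2 := by omega
        rcases hj2 with rfl | rfl
        · rw [ext1_old f k E'' A (by omega) (by omega), show k + 1 + 1 = k + 2 from rfl,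
            ext1_k2, hA]
          exact hred
        · rw [ext1_k2, show k + 2 + 1 = k + 3 from rfl, ext1_k3]
          exact hred.swap'
    · intro j h1 hjk
      rcases Nat.lt_or_ge j (k + 1) with hj' | hj'
      · rw [ext1_old f k E'' A (by omega) (by omega), ext1_old f k E'' A (by omega) (by omega)]
        exact htri j h1 (by omega)
      · have hj2 : j = k + 1 ∨ j = k + 2 := by omega
        rcases hj2 with rfl | rfl
        · rw [show k + 1 - 1 = k from by omega, show k + 1 + 1 = k + 2 from rfl,
            ext1_old f k E'' A (by omega) (by omega), ext1_k2, hE]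
          right; exact hd
        · rw [show k + 2 - 1 = k + 1 from by omega, show k + 2 + 1 = k + 3 from rfl,
            ext1_old f k E'' A (by omega) (by omega), ext1_k3, hA]
          left; rfl

theorem stmt_5 (side : D → Bool) (disj : D → D → Prop)
    (hdisj : Symmetric disj) (hrefl : Reflexive disj)
    (V W A E E' : D) (n m : ℕ)
    (hVW : RPair side disj (V, W)) (hAE : RPair side disj (A, E))
    (hAE' : RPair side disj (A, E'))
    (hdist : pairDist side disj (V, W) (A, E') ≤ (n : ℕ∞))
    (g : ℕ → D) (hg0 : g 0 = E') (hgm : g m = E)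
    (hgred : ∀ i ≤ m, RPair side disj (A, g i))
    (hgdisj : ∀ i < m, disj (g i) (g (i + 1))) :
    pairDist side disj (V, W) (A, E) ≤ ((n + 2 * m : ℕ) : ℕ∞) := by
  obtain ⟨k, hkn, hk⟩ : ∃ k ≤ n, HasChain side disj k (V, W) (A, E') := by
    by_contra hc
    push_neg at hc
    have hlb : ((n + 1 : ℕ) : ℕ∞) ≤ pairDist side disj (V, W) (A, E') := by
      apply le_sInf
      rintro x ⟨k, rfl, hkchain⟩
      have : n < k := by
        by_contra hle
        exact hc k (by omega) hkchain
      exact_mod_cast this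
    have hlt : ((n : ℕ) : ℕ∞) < ((n + 1 : ℕ) : ℕ∞) := by exact_mod_cast Nat.lt_succ_self n
    exact absurd (le_trans hlb hdist) (not_le.mpr hlt)
  have hchain : ∀ i ≤ m, HasChain side disj (k + 2 * i) (V, W) (A, g i) := by
    intro i
    induction i with
    | zero => intro _; simpa [hg0] using hk
    | succ i ih =>
        intro hi
        have h1 := ih (by omega)
        have h2 := extendChain side disj (V, W) A (g i) (g (i + 1)) (k + 2 * i) h1
          (hgred (i + 1) (by omega)) (hgdisj i (by omega))
        have heq : k + 2 * i + 2 = k + 2 * (i + 1) := by omega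
        rwa [heq] at h2
  have hfin := hchain m le_rfl
  rw [hgm] at hfin
  have hmem : ((k + 2 * m : ℕ) : ℕ∞) ∈
      {x : ℕ∞ | ∃ n : ℕ, x = (n : ℕ∞) ∧ HasChain side disj n (V, W) (A, E)} :=
    ⟨k + 2 * m, rfl, hfin⟩
  calc pairDist side disj (V, W) (A, E) ≤ ((k + 2 * m : ℕ) : ℕ∞) := sInf_le hmem
    _ ≤ ((n + 2 * m : ℕ) : ℕ∞) := by exact_mod_cast by omega
end

section
/- Replacing a local maximum by a controlled lower block preserves 'first change is a decrease': Let x_0, ..., x_N be a finite sequence of natural numbers (N ≥ 2) and let k be an index with 0 < k < N, x_{k−1} ≤ x_k, and x_{k+1} ≤ x_k. Let b_1, ..., b_m (m ≥ 1) be natural numbers with b_t ≤ x_k for all t, and let y be the sequence x_0, ..., x_{k−1}, b_1, ..., b_m, x_{k+1}, ..., x_N. Assume that in the sequence (x_{k−1}, b_1, ..., b_m, x_{k+1}) every strict increase between consecutive entries is preceded (within that sequence) by a strict decrease between some earlier pair of consecutive entries. If x has the property that there exists an index i with x_i > x_{i+1} and x_j ≥ x_{j+1} for all j < i, then y has the same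 property. -/
/-- `FirstDec z L` : the finite sequence `z 0, …, z L` has a strict decrease
between consecutive entries, and no strict increase occurs before it. -/
def FirstDec (z : ℕ → ℕ) (L : ℕ) : Prop :=
  ∃ i < L, z (i + 1) < z i ∧ ∀ j < i, z (j + 1) ≤ z j

theorem stmt_10 (N k m : ℕ) (x b : ℕ → ℕ) (hN : 2 ≤ N)
    (hk0 : 0 < k) (hkN : k < N) (hm : 1 ≤ m)
    (hup : x (k - 1) ≤ x k) (hdown : x (k + 1) ≤ x k)
    (hb : ∀ t, 1 ≤ t → t ≤ m → b t ≤ x k)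
    (y : ℕ → ℕ)
    (hy : ∀ i, y i =
      if i < k then x i else if i < k + m then b (i - k + 1) else x (i - m + 1))
    (w : ℕ → ℕ)
    (hw : ∀ t, w t = if t = 0 then x (k - 1) else if t ≤ m then b t else x (k + 1))
    (hblock : ∀ t ≤ m, w t < w (t + 1) → ∃ s < t, w (s + 1) < w s)
    (hx : FirstDec x N) :
    FirstDec y (N + m - 1) := by
  classical
  have hyw : ∀ t, t ≤ m + 1 → y (k - 1 + t) = w t := by
    intro t ht
    rw [hy, hw]
    rcases Nat.eq_zero_or_pos t with rfl | ht1
    · rw [if_pos (by omega : k - 1 + 0 < k), if_pos rfl]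
      norm_num
    · rcases Nat.lt_or_ge t (m + 1) with h2 | h2
      · rw [if_neg (by omega), if_pos (by omega), if_neg (by omega),
          if_pos (by omega)]
        congr 1; omega
      · have ht' : t = m + 1 := by omega
        subst ht'
        rw [if_neg (by omega), if_neg (by omega), if_neg (by omega),
          if_neg (by omega)]
        congr 1; omega
  obtain ⟨i, hiN, hdec, hpre⟩ := hx
  rcases Nat.lt_or_ge (i + 1) k with hik | hik
  · -- decrease fully inside the prefix
    refine ⟨i, by omega, ?_, ?_⟩
    · rw [hy, hy, if_pos (by omega), if_pos (by omega)]; exact hdec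
    · intro j hj
      rw [hy, hy, if_pos (by omega), if_pos (by omega)]
      exact hpre j hj
  rcases Nat.eq_or_lt_of_le hik with hik2 | hik2
  · -- i + 1 = k : contradicts hup
    exfalso
    have h1 : i = k - 1 := by omega
    have h2 : i + 1 = k := by omega
    rw [h2, h1] at hdec
    omega
  -- now i ≥ k
  have hprek : ∀ j, j < k → x (j + 1) ≤ x j := fun j hj => hpre j (by omega)
  by_cases hdw : ∃ t, t ≤ m ∧ w (t + 1) < w t
  · -- there is a decrease in the block; take the least one
    obtain ⟨t, htm, htd⟩ := hdw
    have hex : ∃ t, t ≤ m ∧ w (t + 1) < w t := ⟨t, htm, htd⟩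
    set t0 := Nat.find hex with ht0def
    obtain ⟨ht0m, ht0d⟩ := Nat.find_spec hex
    have hmin : ∀ s, s < t0 → ¬(s ≤ m ∧ w (s + 1) < w s) := fun s hs =>
      Nat.find_min hex hs
    have hnoinc : ∀ s, s < t0 → w (s + 1) ≤ w s := by
      intro s hs
      by_contra hlt
      push_neg at hlt
      obtain ⟨s', hs', hsd⟩ := hblock s (by omega) hlt
      exact hmin s' (by omega) ⟨by omega, hsd⟩
    refine ⟨k - 1 + t0, by omega, ?_, ?_⟩
    · have e1 : k - 1 + t0 + 1 = k - 1 + (t0 + 1) := by omega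
      rw [e1, hyw (t0 + 1) (by omega), hyw t0 (by omega)]
      exact ht0d
    · intro j hj
      rcases Nat.lt_or_ge j (k - 1) with hjk | hjk
      · rw [hy, hy, if_pos (by omega), if_pos (by omega)]
        exact hprek j (by omega)
      · obtain ⟨s, rfl⟩ : ∃ s, j = k - 1 + s := ⟨j - (k - 1), by omega⟩
        have hs1 : k - 1 + s + 1 = k - 1 + (s + 1) := by omega
        rw [hs1, hyw _ (by omega), hyw _ (by omega)]
        exact hnoinc s (by omega)
  · -- no decrease in the block: it is constant
    have hle : ∀ t, t ≤ m → w (t + 1) ≤ w t := by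
      intro t ht
      by_contra hlt
      push_neg at hlt
      obtain ⟨s, hs, hsd⟩ := hblock t ht hlt
      exact hdw ⟨s, by omega, hsd⟩
    have hge : ∀ t, t ≤ m → w t ≤ w (t + 1) := by
      intro t ht
      by_contra hlt
      push_neg at hlt
      exact hdw ⟨t, ht, hlt⟩
    have hconst : ∀ t, t ≤ m + 1 → w t = w 0 := by
      intro t
      induction t with
      | zero => intro _; rfl
      | succ n ih =>
        intro h
        have h1 := hle n (by omega)
        have h2 := hge n (by omega)
        have h3 := ih (by omega)
        omega
    rcases Nat.eq_or_lt_of_le hik2 with hik3 | hik3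
    · -- i = k : contradiction
      exfalso
      have hik : i = k := by omega
      subst hik
      have h1 : x (i - 1 + 1) ≤ x (i - 1) := hpre (i - 1) (by omega)
      have h2 : x (i - 1 + 1) = x i := by congr 1; omega
      have h3 := hconst (m + 1) le_rfl
      rw [hw (m + 1), hw 0, if_neg (by omega), if_neg (by omega), if_pos rfl] at h3
      have h4 : x (i + 1) = x (i - 1) := by
        have : i + 1 = i + 1 := rfl
        simpa using h3
      omega
    · -- i ≥ k + 1 : decrease survives after the block
      refine ⟨i + m - 1, by omega, ?_, ?_⟩
      · have e1 : y (i + m - 1) = x i := by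
          rw [hy, if_neg (by omega), if_neg (by omega)]
          congr 1; omega
        have e2 : y (i + m - 1 + 1) = x (i + 1) := by
          rw [hy, if_neg (by omega), if_neg (by omega)]
          congr 1; omega
        rw [e1, e2]; exact hdec
      · intro j hj
        rcases Nat.lt_or_ge j (k - 1) with hjk | hjk
        · rw [hy, hy, if_pos (by omega), if_pos (by omega)]
          exact hprek j (by omega)
        rcases Nat.lt_or_ge j (k + m) with hjm | hjm
        · obtain ⟨s, rfl⟩ : ∃ s, j = k - 1 + s := ⟨j - (k - 1), by omega⟩
          have hs1 : k - 1 + s + 1 = k - 1 + (s + 1) := by omega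
          rw [hs1, hyw _ (by omega), hyw _ (by omega)]
          exact hle s (by omega)
        · have e1 : y j = x (j - m + 1) := by
            rw [hy, if_neg (by omega), if_neg (by omega)]
          have e2 : y (j + 1) = x (j - m + 1 + 1) := by
            rw [hy, if_neg (by omega), if_neg (by omega)]
            congr 1; omega
          rw [e1, e2]
          exact hpre (j - m + 1) (by omega)
end
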